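/- If P solves the Riccati equation SP + PS^T - 2μ P C^T C P + aI = 0 with P symmetric positive definite and a > 0, and L_{22} ∈ ℝ^{(N-1)×(N-1)} has all eigenvalues with real part at least μ, then the matrix (I_{N-1} ⊗ S) - (L_{22} ⊗ K_0 C) with K_0 = P C^T is Hurwitz. -/

import Mathlib

/-!
An eigenvector of `I ⊗ S - L ⊗ K₀C`, reshaped into a matrix `X` with `S X - K₀C X Lᵀ = z X`,
yields, by following a Jordan chain of `Lᵀ` to its last vector not killed by `X`, an eigenvalue
`λ` of `L` with `z` an eigenvalue of `S - λ K₀C`. For that block the Riccati equation gives the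
Lyapunov inequality `(S - λ K₀C) P + P (S - λ K₀C)ᴴ = -a I - 2 (Re λ - μ) P Cᵀ C P ≺ 0`, and a
Lyapunov inequality with `P ≻ 0` forces every eigenvalue into the open left half-plane.
-/

open Matrix Kronecker
open scoped ComplexOrder

namespace Module.End

variable {K V W : Type*} [Field K] [IsAlgClosed K] [AddCommGroup V] [Module K V]
  [FiniteDimensional K V] [AddCommGroup W] [Module K W]

theorem exists_hasEigenvalue_apply_ne_zero_apply_sub_smul_eq_zero (f : End K V)
    {g : V →ₗ[K] W} (hg : g ≠ 0) :
    ∃ lam w, f.HasEigenvalue lam ∧ g w ≠ 0 ∧ g (f w - lam • w) = 0 := by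
  obtain ⟨lam, u, hu, hgu⟩ : ∃ lam, ∃ u ∈ f.maxGenEigenspace lam, g u ≠ 0 := by
    by_contra! h
    refine hg (LinearMap.ker_eq_top.mp (eq_top_iff.mpr ?_))
    rw [← f.iSup_maxGenEigenspace_eq_top]
    exact iSup_le fun lam u hu => h lam u hu
  have hlam : f.HasEigenvalue lam :=
    HasUnifEigenvalue.lt zero_lt_one <|
      (Submodule.ne_bot_iff _).mpr ⟨u, hu, fun h => hgu (h ▸ map_zero g)⟩
  obtain ⟨k, hk⟩ := (f.mem_maxGenEigenspace lam u).mp hu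
  -- the last vector of the chain `u, (f - lam) u, (f - lam)² u, …` not killed by `g`
  obtain ⟨j, hj, hj1⟩ := Nat.exists_not_and_succ_of_not_zero_of_exists
    (p := fun j => g (((f - lam • 1) ^ j) u) = 0) (by simpa using hgu) ⟨k, by simp [hk]⟩
  refine ⟨lam, ((f - lam • 1) ^ j) u, hlam, hj, ?_⟩
  simpa [pow_succ'] using hj1

end Module.End

namespace Matrix

section ofReal

variable {l m n : Type*}

theorem transpose_map_ofReal (M : Matrix m n ℝ) :
    Mᵀ.map Complex.ofReal = (M.map Complex.ofReal)ᴴ := by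
  ext
  simp

theorem map_ofReal_mul [Fintype n] (A : Matrix l n ℝ) (B : Matrix n m ℝ) :
    (A * B).map Complex.ofReal = A.map Complex.ofReal * B.map Complex.ofReal :=
  Matrix.map_mul (f := Complex.ofRealHom)

theorem kronecker_map_ofReal (A : Matrix l l ℝ) (B : Matrix m m ℝ) :
    (A ⊗ₖ B).map Complex.ofReal = A.map Complex.ofReal ⊗ₖ B.map Complex.ofReal := by
  ext
  simp

open scoped MatrixOrder in
theorem PosDef.map_ofReal [Fintype n] [DecidableEq n] {P : Matrix n n ℝ} (hP : P.PosDef) :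
    (P.map Complex.ofReal).PosDef := by
  obtain ⟨B, hB, rfl⟩ :=
    CStarAlgebra.isStrictlyPositive_iff_eq_star_mul_self.mp hP.isStrictlyPositive
  rw [star_eq_conjTranspose, conjTranspose_eq_transpose_of_trivial, map_ofReal_mul,
    transpose_map_ofReal]
  exact PosDef.conjTranspose_mul_self _
    (mulVec_injective_iff_isUnit.mpr (hB.map Complex.ofRealHom.mapMatrix))

end ofReal

variable {n : Type*} [Fintype n] [DecidableEq n]

theorem mem_spectrum_iff_exists_mulVec_eq_smul {K : Type*} [Field K] {A : Matrix n n K} {z : K} :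
    z ∈ spectrum K A ↔ ∃ v ≠ 0, A *ᵥ v = z • v := by
  rw [← spectrum_toLin', ← Module.End.hasEigenvalue_iff_mem_spectrum]
  constructor
  · intro h
    obtain ⟨v, hv⟩ := h.exists_hasEigenvector
    exact ⟨v, hv.2, by simpa using hv.apply_eq_smul⟩
  · rintro ⟨v, hv0, hv⟩
    exact Module.End.hasEigenvalue_of_hasEigenvector
      ⟨by simpa [Module.End.mem_eigenspace_iff] using hv, hv0⟩

theorem re_lt_zero_of_mem_spectrum_of_lyapunov {𝕜 : Type*} [RCLike 𝕜] {A P : Matrix n n 𝕜}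
    (hP : P.PosDef) (hAP : (-(A * P + P * Aᴴ)).PosDef) {z : 𝕜} (hz : z ∈ spectrum 𝕜 A) :
    RCLike.re z < 0 := by
  have hz' : star z ∈ spectrum 𝕜 Aᴴ := by
    rwa [← star_eq_conjTranspose, spectrum.map_star, Set.mem_star, star_star]
  obtain ⟨w, hw0, hw⟩ := mem_spectrum_iff_exists_mulVec_eq_smul.mp hz'
  have hwA : star w ᵥ* A = z • star w := by
    rw [← conjTranspose_conjTranspose A, ← star_mulVec, hw, star_smul, star_star]
  have hquad : star w ⬝ᵥ (A * P + P * Aᴴ) *ᵥ w = (z + star z) * (star w ⬝ᵥ P *ᵥ w) := by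
    rw [add_mulVec, dotProduct_add, ← mulVec_mulVec, ← mulVec_mulVec, dotProduct_mulVec, hwA, hw,
      mulVec_smul, smul_dotProduct, dotProduct_smul, smul_eq_mul, smul_eq_mul, add_mul]
  have hp := RCLike.pos_iff.mp (hP.dotProduct_mulVec_pos hw0)
  have hq := (RCLike.pos_iff.mp (hAP.dotProduct_mulVec_pos hw0)).1
  rw [neg_mulVec, dotProduct_neg, hquad, RCLike.star_def, RCLike.add_conj, map_neg,
    ← RCLike.ofReal_ofNat, ← RCLike.ofReal_mul, RCLike.re_ofReal_mul] at hq
  nlinarith [hp.1]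

theorem neg_lyapunov_posDef_of_riccati {𝕜 k : Type*} [RCLike 𝕜] [Fintype k]
    {S P : Matrix n n 𝕜} {C : Matrix k n 𝕜} {μ a : ℝ} (ha : 0 < a) (hP : P.IsHermitian)
    (hRic : S * P + P * Sᴴ - (2 * μ) • (P * Cᴴ * C * P) + a • (1 : Matrix n n 𝕜) = 0)
    {lam : 𝕜} (hlam : μ ≤ RCLike.re lam) :
    (-((S - lam • (P * Cᴴ * C)) * P + P * (S - lam • (P * Cᴴ * C))ᴴ)).PosDef := by
  set Q := P * Cᴴ * C * P
  have hQ : Q.PosSemidef := by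
    have : Q = (C * P)ᴴ * (C * P) := by
      simp only [Q, conjTranspose_mul, hP.eq, Matrix.mul_assoc]
    rw [this]
    exact posSemidef_conjTranspose_mul_self _
  have hSP : S * P + P * Sᴴ = (2 * μ) • Q - a • (1 : Matrix n n 𝕜) := by
    rw [← sub_eq_zero, ← hRic]
    abel
  have hQ' : P * (P * Cᴴ * C)ᴴ = Q := by
    simp only [Q, conjTranspose_mul, conjTranspose_conjTranspose, hP.eq, Matrix.mul_assoc]
  have hlamQ : lam • Q + star lam • Q = (2 * RCLike.re lam) • Q := by
    rw [← add_smul, RCLike.star_def, RCLike.add_conj, RCLike.real_smul_eq_coe_smul (K := 𝕜),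
      RCLike.ofReal_mul, RCLike.ofReal_ofNat]
  have key : -((S - lam • (P * Cᴴ * C)) * P + P * (S - lam • (P * Cᴴ * C))ᴴ) =
      a • (1 : Matrix n n 𝕜) + (2 * (RCLike.re lam - μ)) • Q := by
    rw [Matrix.sub_mul, conjTranspose_sub, conjTranspose_smul, Matrix.mul_sub, Matrix.smul_mul,
      Matrix.mul_smul, hQ']
    calc _ = -(S * P + P * Sᴴ) + (lam • Q + star lam • Q) := by abel
      _ = _ := by
        rw [hSP, hlamQ]
        module
  rw [key]
  exact (PosDef.one.smul ha).add_posSemidef (hQ.smul (by linarith))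

theorem exists_mem_spectrum_of_mem_spectrum_one_kronecker_sub_kronecker {m K : Type*}
    [Fintype m] [DecidableEq m] [Field K] [IsAlgClosed K] (A B : Matrix n n K) (L : Matrix m m K)
    {z : K} (hz : z ∈ spectrum K ((1 : Matrix m m K) ⊗ₖ A - L ⊗ₖ B)) :
    ∃ lam ∈ spectrum K L, z ∈ spectrum K (A - lam • B) := by
  obtain ⟨v, hv0, hv⟩ := mem_spectrum_iff_exists_mulVec_eq_smul.mp hz
  set X : Matrix n m K := of fun k i => v (i, k)
  have hvX : v = vec X := rfl
  have hX : A * X - B * X * Lᵀ = z • X := by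
    have hA := kronecker_mulVec_vec A X (1 : Matrix m m K)
    rw [transpose_one, Matrix.mul_one] at hA
    rw [← vec_inj, vec_sub, vec_smul, ← hA, ← kronecker_mulVec_vec, ← sub_mulVec, ← hvX, hv]
  have hX0 : mulVecLin X ≠ 0 := fun h =>
    hv0 (vec_eq_zero_iff.mpr (toLin'.map_eq_zero_iff.mp h))
  obtain ⟨lam, w, hlam, hw, hw'⟩ :=
    Module.End.exists_hasEigenvalue_apply_ne_zero_apply_sub_smul_eq_zero (toLin' Lᵀ) hX0
  refine ⟨lam, ?_, mem_spectrum_iff_exists_mulVec_eq_smul.mpr ⟨X *ᵥ w, hw, ?_⟩⟩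
  · rw [Module.End.hasEigenvalue_iff_mem_spectrum, spectrum_toLin',
      mem_spectrum_iff_isRoot_charpoly, charpoly_transpose] at hlam
    exact mem_spectrum_iff_isRoot_charpoly.mpr hlam
  · have hXL : X *ᵥ (Lᵀ *ᵥ w) = lam • (X *ᵥ w) := by
      simpa [mulVec_sub, sub_eq_zero, mulVec_smul] using hw'
    have h := congrArg (· *ᵥ w) hX
    simp only [sub_mulVec, ← mulVec_mulVec, smul_mulVec, hXL, mulVec_smul] at h
    rwa [sub_mulVec, smul_mulVec]

end Matrix

theorem kronecker_hurwitz_general {d m : ℕ}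
    (S P : Matrix (Fin d) (Fin d) ℝ) (C : Matrix (Fin 1) (Fin d) ℝ)
    (μ a : ℝ) (ha : 0 < a)
    (hP : P.PosDef)
    (hRic : S * P + P * Sᵀ - (2 * μ) • (P * Cᵀ * C * P) + a • (1 : Matrix (Fin d) (Fin d) ℝ) = 0)
    (L22 : Matrix (Fin m) (Fin m) ℝ)
    (hL22 : ∀ lam ∈ spectrum ℂ (L22.map (Complex.ofReal)), μ ≤ lam.re) :
    ∀ z ∈ spectrum ℂ
      ((((1 : Matrix (Fin m) (Fin m) ℝ) ⊗ₖ S) - (L22 ⊗ₖ (P * Cᵀ * C))).map (Complex.ofReal)),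
      z.re < 0 := by
  intro z hz
  set Sc := S.map Complex.ofReal
  set Pc := P.map Complex.ofReal
  set Cc := C.map Complex.ofReal
  have hRicC : Sc * Pc + Pc * Scᴴ - (2 * μ) • (Pc * Ccᴴ * Cc * Pc) +
      a • (1 : Matrix (Fin d) (Fin d) ℂ) = 0 := by
    simpa [map_ofReal_mul, transpose_map_ofReal, Matrix.map_add, Matrix.map_sub, Matrix.map_smul]
      using congrArg (·.map Complex.ofReal) hRic
  have hz' : z ∈ spectrum ℂ
      ((1 : Matrix (Fin m) (Fin m) ℂ) ⊗ₖ Sc - L22.map Complex.ofReal ⊗ₖ (Pc * Ccᴴ * Cc)) := by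
    simpa [kronecker_map_ofReal, map_ofReal_mul, transpose_map_ofReal, Matrix.map_sub] using hz
  obtain ⟨lam, hlam, hzlam⟩ :=
    exists_mem_spectrum_of_mem_spectrum_one_kronecker_sub_kronecker _ _ _ hz'
  have hPc : Pc.PosDef := hP.map_ofReal
  exact re_lt_zero_of_mem_spectrum_of_lyapunov hPc
    (neg_lyapunov_posDef_of_riccati ha hPc.isHermitian hRicC (hL22 lam hlam)) hzlam

/-- If `P ≻ 0` solves the Riccati equation and all eigenvalues of `L₂₂` have real
    part at least `μ`, then `(I ⊗ S) - (L₂₂ ⊗ K₀C)` with `K₀ = P Cᵀ` is Hurwitz. -/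
theorem kronecker_hurwitz {d m : ℕ}
    (S P : Matrix (Fin d) (Fin d) ℝ) (C : Matrix (Fin 1) (Fin d) ℝ)
    (μ a : ℝ) (hμ : 0 < μ) (ha : 0 < a)
    (hP : P.PosDef)
    (hRic : S * P + P * Sᵀ - (2 * μ) • (P * Cᵀ * C * P) + a • (1 : Matrix (Fin d) (Fin d) ℝ) = 0)
    (L22 : Matrix (Fin m) (Fin m) ℝ)
    (hL22 : ∀ lam ∈ spectrum ℂ (L22.map (Complex.ofReal)), μ ≤ lam.re) :
    ∀ z ∈ spectrum ℂ
      ((((1 : Matrix (Fin m) (Fin m) ℝ) ⊗ₖ S) - (L22 ⊗ₖ (P * Cᵀ * C))).map (Complex.ofReal)),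
      z.re < 0 :=
  kronecker_hurwitz_general S P C μ a ha hP hRic L22 hL22
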